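/- For a tree T, F_c(T) = F(T) if and only if T is a path. -/

import Mathlib

open SimpleGraph

/-- A vertex is (eventually) colored in the forcing process starting from `S`:
either it is in `S`, or some colored vertex `u` adjacent to it has all of its
other neighbors colored, so `u` forces it. -/
inductive SimpleGraph.Forced {V : Type*} (G : SimpleGraph V) (S : Set V) : V → Prop
  | init {v : V} (hv : v ∈ S) : G.Forced S v
  | force {u w : V} (hu : G.Forced S u) (hadj : G.Adj u w)
      (hothers : ∀ x, G.Adj u x → x ≠ w → G.Forced S x) : G.Forced S w

/-- `S` is a (zero) forcing set of `G`. -/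
def SimpleGraph.IsForcingSet {V : Type*} (G : SimpleGraph V) (S : Set V) : Prop :=
  ∀ v, G.Forced S v

/-- `S` is a connected forcing set of `G`. -/
def SimpleGraph.IsConnForcingSet {V : Type*} (G : SimpleGraph V) (S : Set V) : Prop :=
  G.IsForcingSet S ∧ (G.induce S).Connected

/-- The (zero) forcing number `F(G)`. -/
noncomputable def SimpleGraph.zfNum {V : Type*} (G : SimpleGraph V) : ℕ :=
  sInf {n | ∃ S : Set V, S.ncard = n ∧ G.IsForcingSet S}

/-- The connected forcing number `F_c(G)`. -/
noncomputable def SimpleGraph.czfNum {V : Type*} (G : SimpleGraph V) : ℕ :=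
  sInf {n | ∃ S : Set V, S.ncard = n ∧ G.IsConnForcingSet S}

/-- `G` is a path graph. -/
def SimpleGraph.IsPathGraph {V : Type*} (G : SimpleGraph V) : Prop :=
  ∃ n : ℕ, Nonempty (G ≃g SimpleGraph.pathGraph n)

/-- Deletion of a vertex. -/
def SimpleGraph.delVert {V : Type*} (G : SimpleGraph V) (v : V) :
    SimpleGraph {w : V // w ≠ v} :=
  G.induce {w : V | w ≠ v}

/-- `v` is a leaf (degree-1 vertex) of `G`. -/
def SimpleGraph.IsLeaf {V : Type*} (G : SimpleGraph V) (v : V) : Prop :=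
  (G.neighborSet v).ncard = 1

/-
The branches of `T` at a vertex `x` are the components of `T - x`, one for each neighbour of `x`.
The union of two branches missing a forcing set `S` is a fort, so at most one branch at `x` misses
`S`; if `S` is connected and `x ∉ S`, then `S` lies in a single branch, so `x` has degree at most
two. Hence when `{v}` is forcing every degree is at most two and `T` is a path, while a path is
forced from an endpoint: `F_c = F = 1` exactly for paths. If a connected forcing set `S` has two or
more vertices, take a leaf `u` of `T[S]` with neighbour `v ∈ S`. The branch at `u` outside `S`, if
any, is a hanging path whose far end `t` forces `u` and then `v`, so `S \ {u, v} ∪ {t}` is a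
smaller forcing set and `F < F_c`.
-/

namespace SimpleGraph

variable {V : Type*} {G : SimpleGraph V} {S S' : Set V} {u x b c v w : V}

theorem Forced.trans (hS : ∀ s ∈ S, G.Forced S' s) (h : G.Forced S v) : G.Forced S' v := by
  induction h with
  | init hv => exact hS _ hv
  | force _ hadj _ ihu ihothers => exact .force ihu hadj ihothers

theorem Forced.mono (hSS' : S ⊆ S') (h : G.Forced S v) : G.Forced S' v :=
  h.trans fun _ hs => .init (hSS' hs)

theorem Forced.nonempty (h : G.Forced S v) : S.Nonempty := by
  induction h with
  | init hv => exact ⟨_, hv⟩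
  | force _ _ _ ihu => exact ihu

def IsFort (G : SimpleGraph V) (F : Set V) : Prop :=
  ∀ w ∉ F, ∀ f ∈ F, G.Adj w f → ∃ f' ∈ F, f' ≠ f ∧ G.Adj w f'

theorem Forced.notMem_of_isFort {F : Set V} (hF : G.IsFort F) (hSF : Disjoint S F)
    (h : G.Forced S v) : v ∉ F := by
  induction h with
  | init hv => exact hSF.notMem_of_mem_left hv
  | force _ hadj _ ihu ihothers =>
    intro hwF
    obtain ⟨f', hf'F, hf'ne, hf'adj⟩ := hF _ ihu _ hwF hadj
    exact ihothers f' hf'adj hf'ne hf'F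

def branch (G : SimpleGraph V) (x b : V) : Set V :=
  {w | ∃ p : G.Walk b w, x ∉ p.support}

theorem notMem_branch_self : x ∉ G.branch x b :=
  fun ⟨p, hp⟩ => hp p.end_mem_support

theorem mem_branch_self (hxb : G.Adj x b) : b ∈ G.branch x b :=
  ⟨.nil, by simpa using hxb.ne⟩

theorem mem_branch_of_walk (hw : w ∈ G.branch x b) (q : G.Walk w v) (hq : x ∉ q.support) :
    v ∈ G.branch x b := by
  obtain ⟨p, hp⟩ := hw
  exact ⟨p.append q, by simp [Walk.mem_support_append_iff, hp, hq]⟩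

theorem mem_branch_of_adj (hw : w ∈ G.branch x b) (hwv : G.Adj w v) (hvx : v ≠ x) :
    v ∈ G.branch x b := by
  obtain ⟨p, hp⟩ := hw
  exact ⟨p.concat hwv, by simp [Walk.support_concat, hp, hvx.symm]⟩

theorem isFort_branch_union (hxb : G.Adj x b) (hxc : G.Adj x c) (hbc : b ≠ c) :
    G.IsFort (G.branch x b ∪ G.branch x c) := by
  intro w hw f hf hwf
  by_cases hwx : w = x
  · subst hwx
    by_cases hfb : f = b
    · exact ⟨c, .inr (mem_branch_self hxc), hfb ▸ hbc.symm, hxc⟩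
    · exact ⟨b, .inl (mem_branch_self hxb), Ne.symm hfb, hxb⟩
  · refine absurd ?_ hw
    exact hf.imp (mem_branch_of_adj · hwf.symm hwx) (mem_branch_of_adj · hwf.symm hwx)

theorem IsForcingSet.subsingleton_disjoint_branch (hS : G.IsForcingSet S) :
    {b | G.Adj x b ∧ Disjoint (G.branch x b) S}.Subsingleton := by
  rintro b ⟨hxb, hb⟩ c ⟨hxc, hc⟩
  by_contra hbc
  exact (hS b).notMem_of_isFort (isFort_branch_union hxb hxc hbc)
    (Disjoint.union_left hb hc).symm (.inl (mem_branch_self hxb))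

theorem exists_walk_support_subset_of_preconnected_induce (hS : (G.induce S).Preconnected)
    (hv : v ∈ S) (hw : w ∈ S) : ∃ p : G.Walk v w, ∀ y ∈ p.support, y ∈ S := by
  obtain ⟨p⟩ := hS ⟨v, hv⟩ ⟨w, hw⟩
  refine ⟨p.map (Embedding.induce S).toHom, fun y hy => ?_⟩
  change y ∈ (p.map (Embedding.induce S).toHom).support at hy
  rw [Walk.support_map, List.mem_map] at hy
  obtain ⟨y, -, rfl⟩ := hy
  exact y.2

namespace IsAcyclic

theorem mem_edges_of_adj (hG : G.IsAcyclic) (h : G.Adj v w) (p : G.Walk v w) :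
    s(v, w) ∈ p.edges :=
  isBridge_iff_forall_walk_mem_edges.mp (isAcyclic_iff_forall_adj_isBridge.mp hG h) p

theorem eq_of_mem_branch (hG : G.IsAcyclic) (hxb : G.Adj x b) (hxc : G.Adj x c)
    (hb : w ∈ G.branch x b) (hc : w ∈ G.branch x c) : b = c := by
  obtain ⟨p, hp⟩ := hb
  obtain ⟨q, hq⟩ := hc
  have h := hG.mem_edges_of_adj hxb (.cons hxc (q.append p.reverse))
  rw [Walk.edges_cons, List.mem_cons] at h
  rcases h with h | h
  · exact Sym2.congr_right.mp h
  · have := Walk.fst_mem_support_of_mem_edges _ h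
    simp [Walk.mem_support_append_iff, hp, hq] at this

theorem subsingleton_not_disjoint_branch (hG : G.IsAcyclic) (hS : (G.induce S).Preconnected)
    (hx : x ∉ S) : {b | G.Adj x b ∧ ¬Disjoint (G.branch x b) S}.Subsingleton := by
  rintro b ⟨hxb, hb⟩ c ⟨hxc, hc⟩
  obtain ⟨s, hsb, hs⟩ := Set.not_disjoint_iff.mp hb
  obtain ⟨s', hs'c, hs'⟩ := Set.not_disjoint_iff.mp hc
  obtain ⟨p, hp⟩ := exists_walk_support_subset_of_preconnected_induce hS hs hs'
  exact hG.eq_of_mem_branch hxb hxc (mem_branch_of_walk hsb p fun h => hx (hp _ h)) hs'c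

theorem ncard_neighborSet_le_two [Finite V] (hG : G.IsAcyclic) (hS : G.IsForcingSet S)
    (hconn : (G.induce S).Preconnected) (hx : x ∉ S) : (G.neighborSet x).ncard ≤ 2 := by
  have hsplit : G.neighborSet x = {b | G.Adj x b ∧ ¬Disjoint (G.branch x b) S} ∪
      {b | G.Adj x b ∧ Disjoint (G.branch x b) S} := by
    ext b
    simp only [mem_neighborSet, Set.mem_union, Set.mem_ofPred_eq]
    tauto
  calc (G.neighborSet x).ncard ≤ _ + _ := hsplit ▸ Set.ncard_union_le _ _
    _ ≤ 1 + 1 := add_le_add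
      (Set.ncard_le_one_iff_subsingleton.2 (hG.subsingleton_not_disjoint_branch hconn hx))
      (Set.ncard_le_one_iff_subsingleton.2 hS.subsingleton_disjoint_branch)

theorem disjoint_branch_of_notMem (hG : G.IsAcyclic) (hS : (G.induce S).Preconnected)
    (hu : u ∈ S) (hv : v ∉ S) (huv : G.Adj u v) : Disjoint (G.branch u v) S := by
  rw [Set.disjoint_right]
  rintro s hs ⟨r, hr⟩
  obtain ⟨q, hq⟩ := exists_walk_support_subset_of_preconnected_induce hS hs hu
  have h := hG.mem_edges_of_adj huv.symm (r.append q)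
  rw [Walk.edges_append, List.mem_append] at h
  rcases h with h | h
  · exact hr (Walk.snd_mem_support_of_mem_edges _ h)
  · exact hv (hq _ (Walk.fst_mem_support_of_mem_edges _ h))

theorem branch_ssubset (hG : G.IsAcyclic) (hxb : G.Adj x b) (hbc : G.Adj b c) (hcx : c ≠ x) :
    G.branch b c ⊂ G.branch x b := by
  classical
  have hsub : G.branch b c ⊆ G.branch x b := by
    rintro w ⟨q, hq⟩
    have hxq : x ∉ q.support := fun hx => hcx <| hG.eq_of_mem_branch hbc hxb.symm
      ⟨q.takeUntil x hx, fun h => hq (q.support_takeUntil_subset_support hx h)⟩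
      (mem_branch_self hxb.symm)
    exact ⟨.cons hbc q, by simp [hxb.ne, hxq]⟩
  exact (Set.ssubset_iff_of_subset hsub).2 ⟨b, mem_branch_self hxb, notMem_branch_self⟩

theorem exists_forced_of_branch [Finite V] (hG : G.IsAcyclic) (hxb : G.Adj x b)
    (hdeg : ∀ w ∈ G.branch x b, (G.neighborSet w).ncard ≤ 2) :
    ∃ t, G.Forced {t} x ∧ G.Forced {t} b := by
  -- The branch is a hanging path; its far end forces back along it up to `x`.
  induction hn : (G.branch x b).ncard using Nat.strong_induction_on generalizing x b with
  | _ n ih =>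
  by_cases hc : ∃ c, G.Adj b c ∧ c ≠ x
  · obtain ⟨c, hbc, hcx⟩ := hc
    have hnb : ∀ y, G.Adj b y → y = x ∨ y = c := by
      intro y hby
      by_contra! hy
      exact (hdeg b (mem_branch_self hxb)).not_gt <| (Set.two_lt_ncard_iff).2
        ⟨x, c, y, hxb.symm, hbc, hby, hcx.symm, hy.1.symm, hy.2.symm⟩
    have hsub := hG.branch_ssubset hxb hbc hcx
    obtain ⟨t, htb, htc⟩ :=
      ih _ (hn ▸ Set.ncard_lt_ncard hsub) hbc (fun w hw => hdeg w (hsub.subset hw)) rfl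
    exact ⟨t, .force htb hxb.symm fun y hby hyx => (hnb y hby).resolve_left hyx ▸ htc, htb⟩
  · push Not at hc
    exact ⟨b, .force (.init rfl) hxb.symm fun y hby hyx => absurd (hc y hby) hyx, .init rfl⟩

theorem exists_leaf_of_connected_induce [Finite V] (hG : G.IsAcyclic)
    (hS : (G.induce S).Connected) (h2 : 1 < S.ncard) :
    ∃ u ∈ S, ∃ v ∈ S, G.Adj u v ∧ ∀ w ∈ S, G.Adj u w → w = v := by
  classical
  have := Fintype.ofFinite S
  have := (Set.one_lt_ncard_iff_nontrivial.mp h2).coe_sort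
  obtain ⟨⟨u, hu⟩, hdeg⟩ :=
    (IsTree.mk hS (hG.induce S)).exists_vert_degree_one_of_nontrivial
  obtain ⟨⟨v, hv⟩, huv, huniq⟩ := degree_eq_one_iff_existsUnique_adj.mp hdeg
  exact ⟨u, hu, v, hv, huv, fun w hw huw => congrArg Subtype.val (huniq ⟨w, hw⟩ huw)⟩

theorem exists_forced_of_leaf [Finite V] (hG : G.IsAcyclic) (hS : G.IsConnForcingSet S)
    (hu : u ∈ S) (huv : G.Adj u v) (hleaf : ∀ w ∈ S, G.Adj u w → w = v) :
    ∃ t, G.Forced {t} u ∧ G.Forced {t} v := by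
  have hconn := hS.2.preconnected
  by_cases hout : ∃ p ∉ S, G.Adj u p
  · obtain ⟨p, hp, hup⟩ := hout
    have hdisj := hG.disjoint_branch_of_notMem hconn hu hp hup
    have hnb : ∀ y, G.Adj u y → y ≠ v → y = p := fun y huy hyv =>
      have hy : y ∉ S := fun hy => hyv (hleaf y hy huy)
      hS.1.subsingleton_disjoint_branch
        ⟨huy, hG.disjoint_branch_of_notMem hconn hu hy huy⟩ ⟨hup, hdisj⟩
    obtain ⟨t, htu, htp⟩ := hG.exists_forced_of_branch hup fun w hw =>
      hG.ncard_neighborSet_le_two hS.1 hconn (hdisj.notMem_of_mem_left hw)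
    exact ⟨t, htu, .force htu huv fun y huy hyv => hnb y huy hyv ▸ htp⟩
  · push Not at hout
    refine ⟨u, .init rfl, .force (.init rfl) huv fun y huy hyv => ?_⟩
    exact absurd (hleaf y (by_contra fun hy => hout y hy huy) huy) hyv

theorem exists_isForcingSet_ncard_lt [Finite V] (hG : G.IsAcyclic) (hS : G.IsConnForcingSet S)
    (h2 : 1 < S.ncard) : ∃ S' : Set V, G.IsForcingSet S' ∧ S'.ncard < S.ncard := by
  obtain ⟨u, hu, v, hv, huv, hleaf⟩ := hG.exists_leaf_of_connected_induce hS.2 h2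
  obtain ⟨t, htu, htv⟩ := hG.exists_forced_of_leaf hS hu huv hleaf
  refine ⟨insert t (S \ {u, v}), fun w => (hS.1 w).trans fun s hs => ?_, ?_⟩
  · have ht : {t} ⊆ insert t (S \ {u, v}) := Set.singleton_subset_iff.2 (Set.mem_insert _ _)
    obtain rfl | hsu := eq_or_ne s u
    · exact htu.mono ht
    obtain rfl | hsv := eq_or_ne s v
    · exact htv.mono ht
    exact .init (.inr ⟨hs, by simp [hsu, hsv]⟩)
  · calc (insert t (S \ {u, v})).ncard ≤ (S \ {u, v}).ncard + 1 := Set.ncard_insert_le _ _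
      _ = S.ncard - 2 + 1 := by
        rw [Set.ncard_sdiff (by simp [Set.insert_subset_iff, hu, hv]), Set.ncard_pair huv.ne]
      _ < S.ncard := by omega

end IsAcyclic

theorem Reachable.mem_of_adj_closed {C : Set V} (hC : ∀ x ∈ C, ∀ y, G.Adj x y → y ∈ C)
    (hu : u ∈ C) (h : G.Reachable u v) : v ∈ C := by
  obtain ⟨p⟩ := h
  induction p with
  | nil => exact hu
  | cons hadj _ ih => exact ih (hC _ hu _ hadj)

theorem IsTree.exists_isHamiltonian [Finite V] [DecidableEq V] (hT : G.IsTree)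
    (hdeg : ∀ x, (G.neighborSet x).ncard ≤ 2) :
    ∃ (u v : V) (p : G.Walk u v), p.IsHamiltonian := by
  -- A longest path is Hamiltonian: a neighbour off the path would extend it at an end or give
  -- an interior vertex a third neighbour.
  have := hT.connected.nonempty
  obtain ⟨u, v, p, hp, hmax⟩ := Walk.exists_isPath_forall_isPath_length_le_length G
  refine ⟨u, v, p, hp.isHamiltonian_of_mem fun w =>
    (hT.connected u w).mem_of_adj_closed (C := {w | w ∈ p.support}) ?_ p.start_mem_support⟩
  intro y hy z hyz
  by_contra hz
  obtain ⟨i, rfl, hi⟩ := Walk.mem_support_iff_exists_getVert.mp hy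
  rcases Nat.eq_zero_or_pos i with rfl | hi0
  · rw [Walk.getVert_zero] at hyz
    have := hmax _ _ _ (hp.cons hz (h := hyz.symm))
    simp at this
  rcases hi.eq_or_lt with rfl | hil
  · rw [Walk.getVert_length] at hyz
    have := hmax _ _ _ (hp.concat hz hyz)
    simp at this
  · have hprev := p.adj_getVert_succ (i := i - 1) (by omega)
    rw [Nat.sub_add_cancel hi0] at hprev
    have hnext := p.adj_getVert_succ hil
    have hne : p.getVert (i - 1) ≠ p.getVert (i + 1) := fun h => by
      have := hp.getVert_injOn (by rw [Set.mem_ofPred_eq]; omega)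
        (by rw [Set.mem_ofPred_eq]; omega) h
      omega
    have hz' : ∀ j, p.getVert j ≠ z := fun j h => hz (h ▸ p.getVert_mem_support j)
    exact (hdeg _).not_gt <| (Set.two_lt_ncard_iff).2
      ⟨_, _, z, hprev.symm, hnext, hyz, hne, hz' _, hz' _⟩

theorem IsTree.isPathGraph_of_isHamiltonian [Fintype V] [DecidableEq V] (hT : G.IsTree)
    {p : G.Walk u v} (hp : p.IsHamiltonian) : G.IsPathGraph := by
  classical
  -- `p` has `card V - 1` distinct edges, as many as the tree, so it uses all of them.
  have hedges : p.edges.toFinset = G.edgeFinset := by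
    refine Finset.eq_of_subset_of_card_le (fun e he => ?_) ?_
    · simpa using p.edges_subset_edgeSet (List.mem_toFinset.mp he)
    · rw [List.toFinset_card_of_nodup hp.isPath.isTrail.edges_nodup, Walk.length_edges,
        hp.length_eq]
      have := hT.card_edgeFinset
      omega
  have htop : p.toSubgraph = ⊤ := by
    ext x y
    · simp [hp.mem_support]
    · rw [Subgraph.top_adj, Walk.adj_toSubgraph_iff_mem_edges, ← List.mem_toFinset, hedges,
        mem_edgeFinset, mem_edgeSet]
  have e := hp.isPath.pathGraphIsoToSubgraph
  rw [htop] at e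
  exact ⟨p.length + 1, ⟨Subgraph.topIso.symm.trans e.symm⟩⟩

theorem IsTree.isPathGraph_of_isForcingSet_singleton [Fintype V] (hT : G.IsTree)
    (hv : G.IsForcingSet {v}) : G.IsPathGraph := by
  suffices hdeg : ∀ x, (G.neighborSet x).ncard ≤ 2 by
    classical
    obtain ⟨_, _, p, hp⟩ := hT.exists_isHamiltonian hdeg
    exact hT.isPathGraph_of_isHamiltonian hp
  intro x
  obtain rfl | hxv := eq_or_ne x v
  · have : (G.neighborSet x).ncard ≤ 1 := Set.ncard_le_one_iff_subsingleton.2 <|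
      hv.subsingleton_disjoint_branch.anti fun b hb =>
        ⟨hb, Set.disjoint_singleton_right.2 notMem_branch_self⟩
    omega
  · exact hT.isAcyclic.ncard_neighborSet_le_two hv Preconnected.of_subsingleton hxv

theorem Forced.map {V' : Type*} {G' : SimpleGraph V'} (e : G ≃g G') (h : G.Forced S v) :
    G'.Forced (e '' S) (e v) := by
  induction h with
  | init hv => exact .init (Set.mem_image_of_mem e hv)
  | force _ hadj _ ihu ihothers =>
    refine .force ihu (e.map_adj_iff.2 hadj) fun x hx hxw => ?_
    rw [← e.apply_symm_apply x]
    exact ihothers _ (by rwa [← e.map_adj_iff, e.apply_symm_apply]) (by rintro rfl; simp at hxw)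

theorem isForcingSet_pathGraph_zero {n : ℕ} (hn : 0 < n) :
    (pathGraph n).IsForcingSet {⟨0, hn⟩} := by
  suffices h : ∀ k (hk : k < n), (pathGraph n).Forced {⟨0, hn⟩} ⟨k, hk⟩ from
    fun i => h i i.2
  intro k
  induction k using Nat.strong_induction_on with
  | _ k ih =>
  intro hk
  rcases k with _ | k
  · exact .init rfl
  · refine .force (ih k (by omega) (by omega)) (by simp [pathGraph_adj]) fun i hi hik => ?_
    have : i.val + 1 = k := by
      rcases pathGraph_adj.mp hi with hi | hi
      · exact absurd (Fin.ext hi.symm) hik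
      · exact hi
    exact ih i (by omega) i.2

theorem IsPathGraph.exists_isConnForcingSet_singleton [Nonempty V] (h : G.IsPathGraph) :
    ∃ v, G.IsConnForcingSet {v} := by
  obtain ⟨n, ⟨e⟩⟩ := h
  have hn : 0 < n := (e (Classical.arbitrary V)).pos
  refine ⟨e.symm ⟨0, hn⟩, fun w => ?_,
    (connected_iff _).2 ⟨.of_subsingleton, ⟨⟨_, rfl⟩⟩⟩⟩
  simpa using (isForcingSet_pathGraph_zero hn (e w)).map e.symm

theorem zfNum_le_ncard (hS : G.IsForcingSet S) : G.zfNum ≤ S.ncard :=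
  Nat.sInf_le ⟨S, rfl, hS⟩

theorem czfNum_le_ncard (hS : G.IsConnForcingSet S) : G.czfNum ≤ S.ncard :=
  Nat.sInf_le ⟨S, rfl, hS⟩

theorem one_le_zfNum [Finite V] [Nonempty V] : 1 ≤ G.zfNum :=
  le_csInf ⟨_, Set.univ, rfl, fun _ => .init trivial⟩ fun _ ⟨_, hn, hS⟩ =>
    hn ▸ (Set.ncard_pos).2 (hS (Classical.arbitrary V)).nonempty

theorem Connected.exists_isConnForcingSet_ncard_eq_czfNum (hG : G.Connected) :
    ∃ S : Set V, G.IsConnForcingSet S ∧ S.ncard = G.czfNum := by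
  obtain ⟨S, hScard, hS⟩ :=
    Nat.sInf_mem (s := {n | ∃ S : Set V, S.ncard = n ∧ G.IsConnForcingSet S})
    ⟨_, Set.univ, rfl, fun _ => .init trivial, (induceUnivIso G).connected_iff.2 hG⟩
  exact ⟨S, hS, hScard⟩

end SimpleGraph

theorem tree_forcing_eq_connected_forcing_iff_path {V : Type*} [Fintype V]
    (T : SimpleGraph V) (hT : T.IsTree) :
    T.czfNum = T.zfNum ↔ T.IsPathGraph := by
  have := hT.connected.nonempty
  obtain ⟨S, hS, hScard⟩ := hT.connected.exists_isConnForcingSet_ncard_eq_czfNum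
  have hzf := zfNum_le_ncard hS.1
  constructor
  · intro h
    have hle : S.ncard ≤ 1 := by
      by_contra! h2
      obtain ⟨S', hS', hlt⟩ := hT.isAcyclic.exists_isForcingSet_ncard_lt hS h2
      have := zfNum_le_ncard hS'
      omega
    have hpos := (Set.ncard_pos).2 (Set.nonempty_coe_sort.mp hS.2.nonempty)
    obtain ⟨v, rfl⟩ := Set.ncard_eq_one.mp (le_antisymm hle hpos)
    exact hT.isPathGraph_of_isForcingSet_singleton hS.1
  · intro hpath
    obtain ⟨v, hv⟩ := hpath.exists_isConnForcingSet_singleton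
    have h1 := czfNum_le_ncard hv
    have h2 : 1 ≤ T.zfNum := one_le_zfNum
    rw [Set.ncard_singleton] at h1
    omega
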